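/- arXiv:1802.03444 — 4 statements merged into one kernel-verified Lean document; each statement's English description precedes it below -/
import Mathlib

section
/- Let M and N be symmetric v×v matrices lying in the Bose-Mesner algebra of a symmetric association scheme (i.e., in the common span of the 01-matrices A_0 = I, A_1, ..., A_d which are symmetric, pairwise Schur-orthogonal, sum to J, and whose span is closed under matrix multiplication). If M and N are positive semidefinite and M ∘ N = γI for some scalar γ, then (elsm(M)/tr(M)) · (elsm(N)/tr(N)) ≤ v. -/
/-!
In the Bose–Mesner algebra `M` has constant diagonal (the classes `A r`, `r ≠ 0`, are
Schur-orthogonal to `A 0 = I`) and commutes with `J`, so the all-ones vector is an eigenvector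
of `M`, with eigenvalue `ρ` say. Deflating it keeps positivity: `M - (ρ / v) J ⪰ 0`, and by the
Schur product theorem `(M - (ρ / v) J) ∘ N = γ I - (ρ / v) N ⪰ 0`. Its quadratic form at the
all-ones vector gives `elsm M * elsm N ≤ v ^ 2 * (γ v)`, while the constant diagonal gives
`tr M * tr N = v * (γ v)`.
-/

open Matrix

namespace Matrix

variable {n : Type*} [Fintype n]

theorem PosSemidef.sub_smul_vecMulVec_of_mulVec_eq {M : Matrix n n ℝ} (hM : M.PosSemidef)
    {u : n → ℝ} {ρ : ℝ} (hu : M *ᵥ u = ρ • u) :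
    (M - (ρ / (u ⬝ᵥ u)) • vecMulVec u u).PosSemidef := by
  rcases eq_or_ne (u ⬝ᵥ u) 0 with hu0 | hu0
  · simpa [hu0] using hM
  have hMt : Mᵀ = M := by simpa using hM.isHermitian.eq
  refine .of_dotProduct_mulVec_nonneg ?_ fun x => ?_
  · exact hM.isHermitian.sub
      ((posSemidef_vecMulVec_self_star u).isHermitian.smul (IsSelfAdjoint.all _))
  have huM : u ⬝ᵥ (M *ᵥ x) = ρ * (u ⬝ᵥ x) := by
    rw [dotProduct_mulVec, ← mulVec_transpose, hMt, hu, smul_dotProduct, smul_eq_mul]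
  -- `x - (u ⬝ᵥ x / u ⬝ᵥ u) • u` is the component of `x` orthogonal to `u`
  have key := hM.dotProduct_mulVec_nonneg (x - ((u ⬝ᵥ x) / (u ⬝ᵥ u)) • u)
  simp only [star_trivial, mulVec_sub, mulVec_smul, dotProduct_sub, sub_dotProduct,
    dotProduct_smul, smul_dotProduct, smul_eq_mul, huM, hu, sub_mulVec, smul_mulVec,
    vecMulVec_mulVec, op_smul_eq_mul] at key ⊢
  rw [dotProduct_comm x u] at key ⊢
  convert key using 1
  field_simp
  ring

theorem PosSemidef.sum_mul_sum_le_card_sq_mul_sum_mul {M N : Matrix n n ℝ} (hM : M.PosSemidef)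
    (hN : N.PosSemidef) {ρ : ℝ} (hρ : M *ᵥ 1 = ρ • 1) :
    (∑ i, ∑ j, M i j) * (∑ i, ∑ j, N i j) ≤ Fintype.card n ^ 2 * ∑ i, ∑ j, M i j * N i j := by
  have hrow i : ∑ j, M i j = ρ := by simpa [mulVec, dotProduct] using congrFun hρ i
  have hschur : ρ / Fintype.card n * ∑ i, ∑ j, N i j ≤ ∑ i, ∑ j, M i j * N i j := by
    simpa [dotProduct, mulVec, sub_mul, Finset.sum_sub_distrib, ← Finset.mul_sum] using
      ((hM.sub_smul_vecMulVec_of_mulVec_eq hρ).hadamard hN).dotProduct_mulVec_nonneg 1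
  simp only [hrow, Finset.sum_const, Finset.card_univ, nsmul_eq_mul]
  calc (Fintype.card n : ℝ) * ρ * ∑ i, ∑ j, N i j
      = (Fintype.card n : ℝ) ^ 2 * (ρ / Fintype.card n * ∑ i, ∑ j, N i j) := by
        rcases eq_or_ne (Fintype.card n : ℝ) 0 with h | h
        · simp [h]
        · field_simp
    _ ≤ Fintype.card n ^ 2 * ∑ i, ∑ j, M i j * N i j := by gcongr

theorem exists_mulVec_one_eq_smul_of_commute {R : Type*} [CommSemiring R] {Q : Matrix n n R}
    (hQ : Commute Q (of fun _ _ => 1)) : ∃ ρ : R, Q *ᵥ 1 = ρ • 1 := by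
  rcases isEmpty_or_nonempty n with hn | hn
  · exact ⟨0, funext hn.elim⟩
  obtain ⟨j⟩ := hn
  refine ⟨∑ k, Q k j, funext fun i => ?_⟩
  simpa [mul_apply, mulVec, dotProduct] using congrFun (congrFun hQ.eq i) j

theorem commute_of_isSymm_mul {R : Type*} [CommSemiring R] {P Q : Matrix n n R}
    (hP : P.IsSymm) (hQ : Q.IsSymm) (hPQ : (P * Q).IsSymm) : Commute P Q := by
  rw [Commute, SemiconjBy, ← hPQ.eq, transpose_mul, hP.eq, hQ.eq]

end Matrix

section AssociationScheme

variable {V : Type*} {d : ℕ} {A : Fin (d + 1) → Matrix V V ℝ}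

theorem sum_smul_apply_self_of_schur_orthogonal [DecidableEq V] (hA0 : A 0 = 1)
    (horth : ∀ r s, r ≠ s → ∀ i j, A r i j * A s i j = 0) (c : Fin (d + 1) → ℝ) (i : V) :
    (∑ r, c r • A r) i i = c 0 := by
  have hdiag r (hr : r ≠ 0) : A r i i = 0 := by simpa [hA0] using horth r 0 hr i i
  rw [Matrix.sum_apply, Finset.sum_eq_single 0 (fun r _ hr => by simp [hdiag r hr]) (by simp)]
  simp [hA0]

theorem commute_allOnes_of_mul_closed [Fintype V] (hsymm : ∀ r, (A r).IsSymm)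
    (hsum : ∑ r, A r = of fun _ _ => (1 : ℝ))
    (hclosed : ∀ r s, ∃ c : Fin (d + 1) → ℝ, A r * A s = ∑ u, c u • A u) (r : Fin (d + 1)) :
    Commute (A r) (of fun _ _ => (1 : ℝ)) := by
  rw [← hsum]
  refine Commute.sum_right _ _ _ fun s _ => commute_of_isSymm_mul (hsymm r) (hsymm s) ?_
  obtain ⟨c, hc⟩ := hclosed r s
  rw [hc]
  exact Finset.sum_induction _ IsSymm (fun _ _ => IsSymm.add) isSymm_zero
    fun u _ => (hsymm u).smul (c u)

end AssociationScheme

theorem clique_coclique_bound_general {V : Type*} [Fintype V] [DecidableEq V] (d : ℕ)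
    (A : Fin (d + 1) → Matrix V V ℝ)
    (hA0 : A 0 = 1)
    (hsymm : ∀ r, (A r).IsSymm)
    (horth : ∀ r s, r ≠ s → ∀ i j, A r i j * A s i j = 0)
    (hsum : ∑ r, A r = Matrix.of (fun _ _ => (1 : ℝ)))
    (hclosed : ∀ r s, ∃ c : Fin (d + 1) → ℝ, A r * A s = ∑ u, c u • A u)
    (M N : Matrix V V ℝ)
    (hM : ∃ c : Fin (d + 1) → ℝ, M = ∑ r, c r • A r)
    (hMpsd : M.PosSemidef) (hNpsd : N.PosSemidef)
    (γ : ℝ) (hSchur : ∀ i j, M i j * N i j = γ * (1 : Matrix V V ℝ) i j) :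
    ((∑ i, ∑ j, M i j) / M.trace) * ((∑ i, ∑ j, N i j) / N.trace) ≤ Fintype.card V := by
  obtain ⟨c, hc⟩ := hM
  have hdiag i : M i i = c 0 := hc ▸ sum_smul_apply_self_of_schur_orthogonal hA0 horth c i
  obtain ⟨ρ, hρ⟩ := exists_mulVec_one_eq_smul_of_commute <| hc ▸ Commute.sum_left _ _ _
    fun r _ => (commute_allOnes_of_mul_closed hsymm hsum hclosed r).smul_left (c r)
  have hschur : ∑ i, ∑ j, M i j * N i j = γ * Fintype.card V := by
    simp [hSchur, one_apply, mul_comm]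
  have htrace : M.trace * N.trace = Fintype.card V * (γ * Fintype.card V) := by
    calc M.trace * N.trace = Fintype.card V * ∑ i, M i i * N i i := by
          simp [trace, hdiag, Finset.mul_sum, mul_assoc]
      _ = Fintype.card V * (γ * Fintype.card V) := by simp [hSchur, mul_comm]
  rw [div_mul_div_comm]
  refine div_le_of_le_mul₀ (mul_nonneg hMpsd.trace_nonneg hNpsd.trace_nonneg) (by positivity) ?_
  calc (∑ i, ∑ j, M i j) * ∑ i, ∑ j, N i j ≤ Fintype.card V ^ 2 * ∑ i, ∑ j, M i j * N i j :=
        hMpsd.sum_mul_sum_le_card_sq_mul_sum_mul hNpsd hρ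
    _ = Fintype.card V * (M.trace * N.trace) := by rw [hschur, htrace]; ring

/-- The clique-coclique bound for symmetric association schemes. -/
theorem clique_coclique_bound {V : Type*} [Fintype V] [DecidableEq V] (d : ℕ)
    (A : Fin (d + 1) → Matrix V V ℝ)
    (hA0 : A 0 = 1)
    (h01 : ∀ r i j, A r i j = 0 ∨ A r i j = 1)
    (hsymm : ∀ r, (A r).IsSymm)
    (horth : ∀ r s, r ≠ s → ∀ i j, A r i j * A s i j = 0)
    (hsum : ∑ r, A r = Matrix.of (fun _ _ => (1 : ℝ)))
    (hclosed : ∀ r s, ∃ c : Fin (d + 1) → ℝ, A r * A s = ∑ u, c u • A u)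
    (M N : Matrix V V ℝ)
    (hM : ∃ c : Fin (d + 1) → ℝ, M = ∑ r, c r • A r)
    (hN : ∃ c : Fin (d + 1) → ℝ, N = ∑ r, c r • A r)
    (hMpsd : M.PosSemidef) (hNpsd : N.PosSemidef)
    (γ : ℝ) (hSchur : ∀ i j, M i j * N i j = γ * (1 : Matrix V V ℝ) i j)
    (htrM : 0 < M.trace) (htrN : 0 < N.trace) :
    ((∑ i, ∑ j, M i j) / M.trace) * ((∑ i, ∑ j, N i j) / N.trace) ≤ Fintype.card V :=
  clique_coclique_bound_general d A hA0 hsymm horth hsum hclosed M N hM hMpsd hNpsd γ hSchur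
end

section
/- The orthogonal projection (with respect to the trace inner product ⟨A,B⟩ = tr(A^T B)) of a positive semidefinite real symmetric matrix onto a transpose-closed unital real matrix algebra is positive semidefinite. -/
open Matrix
open scoped ComplexOrder

/-!
Since `S` and `M` are transpose-invariant, `Pᵀ` is also the Frobenius-orthogonal projection of
`M` onto `S`, so `P` is symmetric by uniqueness. For `Q ∈ S` symmetric, `Q * Q ∈ S` and `M - P ⊥ S`
give `tr (Q P Q) = tr (M Q²) = tr (Q M Q) ≥ 0`. A finite-dimensional unital `*`-subalgebra is
closed, hence stable under the continuous functional calculus, so `Q` may be taken to be the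
spectral projection of `P` onto its negative eigenspaces; then `tr (Q P Q)` is the sum of the
negative eigenvalues of `P`, which must therefore vanish.
-/

namespace Matrix

section RCLike

variable {n 𝕜 : Type*} [Fintype n] [DecidableEq n] [RCLike 𝕜] {A : Matrix n n 𝕜}

lemma IsHermitian.trace_cfc (hA : A.IsHermitian) (f : ℝ → ℝ) :
    (cfc f A).trace = ∑ i, (f (hA.eigenvalues i) : 𝕜) := by
  rw [hA.cfc_eq, IsHermitian.cfc, Unitary.conjStarAlgAut_apply, trace_mul_cycle,
    Unitary.coe_star_mul_self, one_mul, trace_diagonal]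
  rfl

lemma IsHermitian.posSemidef_of_forall_trace_cfc_mul_nonneg (hA : A.IsHermitian)
    (h : ∀ f : ℝ → ℝ, 0 ≤ (cfc f A * A * cfc f A).trace) : A.PosSemidef := by
  let χ : ℝ → ℝ := fun x => if x < 0 then 1 else 0
  have hcont (f : ℝ → ℝ) : ContinuousOn f (spectrum ℝ A) := A.finite_real_spectrum.continuousOn f
  have hχ : cfc χ A * A * cfc χ A = cfc (fun x : ℝ => min x 0) A := calc
    cfc χ A * A * cfc χ A = cfc χ A * cfc id A * cfc χ A := by rw [cfc_id ℝ A]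
    _ = cfc (fun x => χ x * id x * χ x) A := by
      rw [← cfc_mul _ _ _ (hcont _) (hcont _), ← cfc_mul _ _ _ (hcont _) (hcont _)]
    _ = cfc (fun x => min x 0) A := cfc_congr fun x _ => by
      by_cases hx : x < 0 <;> simp [χ, hx, le_of_lt, not_lt.mp]
  have hsum : 0 ≤ ∑ i, min (hA.eigenvalues i) 0 := by
    have := h χ
    rwa [hχ, hA.trace_cfc, ← RCLike.ofReal_sum, RCLike.ofReal_nonneg] at this
  have hmin (i : n) : min (hA.eigenvalues i) 0 = 0 :=
    (Finset.sum_eq_zero_iff_of_nonpos fun j _ => min_le_right _ _).1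
      (le_antisymm (Finset.sum_nonpos fun j _ => min_le_right _ _) hsum) i (Finset.mem_univ i)
  exact hA.posSemidef_iff_eigenvalues_nonneg.2 fun i => min_eq_right_iff.1 (hmin i)

end RCLike

section Real

variable {n : Type*} [Fintype n]

def IsOrthogonalProjection (S : Submodule ℝ (Matrix n n ℝ)) (M P : Matrix n n ℝ) : Prop :=
  P ∈ S ∧ ∀ A ∈ S, ((M - P)ᵀ * A).trace = 0

variable {S : Submodule ℝ (Matrix n n ℝ)} {M P P' : Matrix n n ℝ}

lemma IsOrthogonalProjection.trace_transpose_mul_eq (h : IsOrthogonalProjection S M P)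
    {A : Matrix n n ℝ} (hA : A ∈ S) : (Mᵀ * A).trace = (Pᵀ * A).trace := by
  rw [← sub_eq_zero, ← trace_sub, ← sub_mul, ← transpose_sub, h.2 A hA]

lemma IsOrthogonalProjection.unique (h : IsOrthogonalProjection S M P)
    (h' : IsOrthogonalProjection S M P') : P = P' := by
  have hD : P - P' ∈ S := S.sub_mem h.1 h'.1
  have : ((P - P')ᴴ * (P - P')).trace = 0 := calc
    ((P - P')ᴴ * (P - P')).trace
        = ((M - P')ᵀ * (P - P')).trace - ((M - P)ᵀ * (P - P')).trace := by
      rw [← trace_sub, ← sub_mul, ← transpose_sub, sub_sub_sub_cancel_left,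
        conjTranspose_eq_transpose_of_trivial]
    _ = 0 := by rw [h'.2 _ hD, h.2 _ hD, sub_zero]
  exact sub_eq_zero.1 (trace_conjTranspose_mul_self_eq_zero_iff.1 this)

lemma IsOrthogonalProjection.transpose (hS : ∀ A ∈ S, Aᵀ ∈ S) (hM : M.IsSymm)
    (h : IsOrthogonalProjection S M P) : IsOrthogonalProjection S M Pᵀ := by
  refine ⟨hS P h.1, fun A hA => ?_⟩
  rw [← trace_transpose, transpose_mul, trace_mul_comm, transpose_transpose, ← hM.eq,
    ← transpose_sub]
  exact h.2 Aᵀ (hS A hA)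

lemma IsOrthogonalProjection.isSymm (hS : ∀ A ∈ S, Aᵀ ∈ S) (hM : M.IsSymm)
    (h : IsOrthogonalProjection S M P) : P.IsSymm :=
  (h.transpose hS hM).unique h

end Real

end Matrix

/-- Tomiyama: the orthogonal projection (w.r.t. the trace inner product) of a PSD matrix
onto a transpose-closed unital matrix algebra is PSD. -/
theorem projection_of_posSemidef_posSemidef {n : ℕ}
    (S : Submodule ℝ (Matrix (Fin n) (Fin n) ℝ))
    (hmul : ∀ A ∈ S, ∀ B ∈ S, A * B ∈ S)
    (hone : (1 : Matrix (Fin n) (Fin n) ℝ) ∈ S)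
    (htrans : ∀ A ∈ S, Aᵀ ∈ S)
    (M : Matrix (Fin n) (Fin n) ℝ) (hM : M.PosSemidef)
    (P : Matrix (Fin n) (Fin n) ℝ) (hP : P ∈ S)
    (hproj : ∀ A ∈ S, ((M - P)ᵀ * A).trace = 0) :
    P.PosSemidef := by
  have hMsymm : M.IsSymm := isHermitian_iff_isSymm.1 hM.1
  have hPM : IsOrthogonalProjection S M P := ⟨hP, hproj⟩
  have hPsymm : P.IsSymm := hPM.isSymm htrans hMsymm
  let T : StarSubalgebra ℝ (Matrix (Fin n) (Fin n) ℝ) :=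
    { S.toSubalgebra hone (fun _ _ hA hB => hmul _ hA _ hB) with star_mem' := htrans _ }
  have : IsClosed (T : Set (Matrix (Fin n) (Fin n) ℝ)) := S.closed_of_finiteDimensional
  refine (isHermitian_iff_isSymm.2 hPsymm).posSemidef_of_forall_trace_cfc_mul_nonneg fun f => ?_
  set Q := cfc f P
  have hQ : Q ∈ S := cfc_mem (s := T) f hP
  have hQsymm : Qᴴ = Q := (cfc_predicate f P : IsSelfAdjoint Q)
  calc 0 ≤ (Q * M * Qᴴ).trace := (hM.mul_mul_conjTranspose_same Q).trace_nonneg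
    _ = (Mᵀ * (Q * Q)).trace := by
      rw [hQsymm, hMsymm.eq, trace_mul_cycle, trace_mul_comm M]
    _ = (Pᵀ * (Q * Q)).trace := hPM.trace_transpose_mul_eq (hmul Q hQ Q hQ)
    _ = (Q * P * Q).trace := by
      rw [hPsymm.eq, trace_mul_comm P, trace_mul_cycle Q P Q]
end

section
/- Let F be a t-intersecting family of k-subsets of an n-set, x its characteristic vector, N_F = x x^T, and Ψ the orthogonal projection onto the span of the Johnson scheme matrices A_0, ..., A_k (with respect to the trace inner product). Then Ψ(N_F) is positive semidefinite, lies in the span of A_0, ..., A_{k−t}, tr(Ψ(N_F)) = |F|, and elsm(Ψ(N_F)) = |F|². -/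
/-!
Let `ρ` be the action of `Sym(n)` on `k`-subsets and `R B = (1/n!) Σ_g B(ρ g ·, ρ g ·)` its
Reynolds operator. `R N_F` is an average of conjugates of the rank-one matrix `x xᵀ`, hence positive
semidefinite, and it has the same trace inner product as `N_F` with every invariant matrix: with the
`A_r`, with `I` (trace) and with `J` (entry sum). Since `Sym(n)` is transitive on pairs of
`k`-subsets meeting in `i` points, `R N_F` is constant on these classes, i.e. a combination of the
`A_r`; so it is the orthogonal projection `Ψ(N_F)`. Its entry at `(α, β)` is the average of
`x(gα) x(gβ)`, which vanishes when `|α ∩ β| < t` because `F` is `t`-intersecting; this leaves only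
`A_0, …, A_{k-t}`.
-/

open Matrix Finset

namespace Matrix

theorem trace_submatrix_equiv {m R : Type*} [Fintype m] [AddCommMonoid R] (B : Matrix m m R)
    (e : m ≃ m) : (B.submatrix e e).trace = B.trace :=
  e.sum_comp fun a => B a a

section Reynolds

variable {G m R : Type*} [Group G] [Fintype G] [Field R]

def reynolds (ρ : G →* Equiv.Perm m) (B : Matrix m m R) : Matrix m m R :=
  (Fintype.card G : R)⁻¹ • ∑ g, B.submatrix (ρ g) (ρ g)

theorem reynolds_apply_perm (ρ : G →* Equiv.Perm m) (B : Matrix m m R) (h : G) (a b : m) :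
    reynolds ρ B (ρ h a) (ρ h b) = reynolds ρ B a b := by
  simp only [reynolds, smul_apply, sum_apply, submatrix_apply]
  congr 1
  exact Fintype.sum_equiv (Equiv.mulRight h) _ _ fun g => by simp

theorem reynolds_apply_eq_zero (ρ : G →* Equiv.Perm m) {B : Matrix m m R} {a b : m}
    (h : ∀ g, B (ρ g a) (ρ g b) = 0) : reynolds ρ B a b = 0 := by
  simp [reynolds, sum_apply, h]

theorem trace_transpose_reynolds_mul [Fintype m] [CharZero R] (ρ : G →* Equiv.Perm m)
    (B : Matrix m m R) {C : Matrix m m R} (hC : ∀ g a b, C (ρ g a) (ρ g b) = C a b) :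
    ((reynolds ρ B)ᵀ * C).trace = (Bᵀ * C).trace := by
  have hCg (g : G) : C.submatrix (ρ g) (ρ g) = C := ext (hC g)
  have hterm (g : G) : ((B.submatrix (ρ g) (ρ g))ᵀ * C).trace = (Bᵀ * C).trace := by
    conv_lhs => rw [← hCg g, transpose_submatrix, submatrix_mul_equiv, trace_submatrix_equiv]
  simp only [reynolds, transpose_smul, transpose_sum, smul_mul, sum_mul, trace_smul, trace_sum,
    hterm, sum_const, card_univ, nsmul_eq_mul, smul_eq_mul]
  rw [← mul_assoc, inv_mul_cancel₀ (Nat.cast_ne_zero.mpr Fintype.card_ne_zero), one_mul]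

theorem trace_reynolds [Fintype m] [DecidableEq m] [CharZero R] (ρ : G →* Equiv.Perm m)
    (B : Matrix m m R) :
    (reynolds ρ B).trace = B.trace := by
  simpa using trace_transpose_reynolds_mul ρ B (C := 1) fun g a b => by
    simp [one_apply, (ρ g).injective.eq_iff]

theorem sum_reynolds [Fintype m] [CharZero R] (ρ : G →* Equiv.Perm m) (B : Matrix m m R) :
    ∑ a, ∑ b, reynolds ρ B a b = ∑ a, ∑ b, B a b := by
  have key (M : Matrix m m R) : (Mᵀ * of fun _ _ => 1).trace = ∑ a, ∑ b, M a b := by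
    simp only [trace, diag_apply, mul_apply, transpose_apply, of_apply, mul_one]
    exact sum_comm
  rw [← key, ← key, trace_transpose_reynolds_mul ρ B fun _ _ _ => rfl]

theorem PosSemidef.reynolds [Fintype m] [LinearOrder R] [IsOrderedRing R] [StarRing R]
    [StarOrderedRing R] (ρ : G →* Equiv.Perm m) {B : Matrix m m R} (hB : B.PosSemidef) :
    (reynolds ρ B).PosSemidef :=
  (posSemidef_sum _ fun g _ => hB.submatrix (ρ g)).smul (inv_nonneg.mpr (Nat.cast_nonneg _))

end Reynolds

theorem eq_of_forall_trace_transpose_sub_mul_eq_zero {m ι R : Type*} [Fintype m] [Field R]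
    [PartialOrder R] [StarRing R] [StarOrderedRing R] [TrivialStar R] {s : Finset ι}
    {A : ι → Matrix m m R} {P Q : Matrix m m R} {c d : ι → R} (hP : P = ∑ i ∈ s, c i • A i)
    (hQ : Q = ∑ i ∈ s, d i • A i) (h : ∀ i ∈ s, ((P - Q)ᵀ * A i).trace = 0) : P = Q := by
  have hPQ : P - Q = ∑ i ∈ s, (c i - d i) • A i := by
    simp only [hP, hQ, sub_smul, sum_sub_distrib]
  rw [← sub_eq_zero, ← trace_conjTranspose_mul_self_eq_zero_iff,
    conjTranspose_eq_transpose_of_trivial]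
  nth_rw 2 [hPQ]
  simp only [Matrix.mul_sum, Matrix.mul_smul, trace_sum, trace_smul]
  exact sum_eq_zero fun i hi => by rw [h i hi, smul_zero]

end Matrix

theorem Equiv.Perm.exists_comp_eq_of_card_fiber_eq {X Y : Type*} [Fintype X] [DecidableEq Y]
    (f f' : X → Y) (h : ∀ y, Fintype.card {x // f x = y} = Fintype.card {x // f' x = y}) :
    ∃ g : Equiv.Perm X, ∀ x, f' (g x) = f x :=
  ⟨Equiv.ofFiberEquiv fun y => Fintype.equivOfCardEq (h y), Equiv.ofFiberEquiv_map _⟩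

def permKSubsets (α : Type*) [DecidableEq α] (k : ℕ) :
    Equiv.Perm α →* Equiv.Perm {s : Finset α // #s = k} where
  toFun g := (Equiv.finsetCongr g).subtypeEquiv fun s => by simp
  map_one' := by ext; simp [Equiv.Perm.one_def]
  map_mul' g h := by ext; simp [Equiv.Perm.mul_def]

def johnsonMatrix (R α : Type*) [Zero R] [One R] [DecidableEq α] (k r : ℕ) :
    Matrix {s : Finset α // #s = k} {s : Finset α // #s = k} R :=
  Matrix.of fun a b => if #(a.1 ∩ b.1) = k - r then 1 else 0

section KSubsets

variable {α : Type*} [DecidableEq α]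

def vennRegion (s t : Finset α) (z : α) : Bool × Bool := (decide (z ∈ s), decide (z ∈ t))

theorem card_vennRegion_fiber [Fintype α] (s t : Finset α) (p : Bool × Bool) :
    Fintype.card {z // vennRegion s t z = p} =
      if p.1 then (if p.2 then #(s ∩ t) else #s - #(t ∩ s))
      else (if p.2 then #t - #(s ∩ t) else Fintype.card α - #(s ∪ t)) := by
  rw [Fintype.card_subtype]
  obtain ⟨_ | _, _ | _⟩ := p <;> simp only [vennRegion, Prod.mk.injEq, decide_eq_true_eq,
    decide_eq_false_iff_not, ite_true, ite_false, Bool.false_eq_true]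
  · rw [← card_compl]; congr 1; ext; simp
  · rw [← card_sdiff]; congr 1; ext; simp [and_comm]
  · rw [← card_sdiff]; congr 1; ext; simp
  · rw [filter_and, filter_mem_eq_inter, filter_mem_eq_inter, univ_inter, univ_inter]

theorem exists_perm_map_eq_map_eq [Fintype α] {s t s' t' : Finset α} (hs : #s = #s')
    (ht : #t = #t') (hst : #(s ∩ t) = #(s' ∩ t')) :
    ∃ g : Equiv.Perm α, s.map g.toEmbedding = s' ∧ t.map g.toEmbedding = t' := by
  have hts : #(t ∩ s) = #(t' ∩ s') := by rwa [inter_comm, inter_comm t']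
  obtain ⟨g, hg⟩ := Equiv.Perm.exists_comp_eq_of_card_fiber_eq (vennRegion s t)
    (vennRegion s' t') fun p => by
      simp only [card_vennRegion_fiber, card_union, hs, ht, hst, hts]
  simp only [vennRegion, Prod.ext_iff, decide_eq_decide] at hg
  refine ⟨g, ?_, ?_⟩ <;> ext z <;> rw [mem_map_equiv]
  · simpa using (hg (g.symm z)).1.symm
  · simpa using (hg (g.symm z)).2.symm

variable {k : ℕ}

@[simp]
theorem coe_permKSubsets_apply (g : Equiv.Perm α) (a : {s : Finset α // #s = k}) :
    (permKSubsets α k g a : Finset α) = a.1.map g.toEmbedding := rfl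

theorem card_inter_permKSubsets (g : Equiv.Perm α) (a b : {s : Finset α // #s = k}) :
    #((permKSubsets α k g a).1 ∩ (permKSubsets α k g b).1) = #(a.1 ∩ b.1) := by
  simp [← map_inter]

theorem exists_permKSubsets_eq [Fintype α] {a b a' b' : {s : Finset α // #s = k}}
    (h : #(a.1 ∩ b.1) = #(a'.1 ∩ b'.1)) :
    ∃ g, permKSubsets α k g a = a' ∧ permKSubsets α k g b = b' := by
  obtain ⟨g, ha, hb⟩ := exists_perm_map_eq_map_eq (a.2.trans a'.2.symm) (b.2.trans b'.2.symm) h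
  exact ⟨g, Subtype.ext ha, Subtype.ext hb⟩

theorem johnsonMatrix_apply_permKSubsets {R : Type*} [Zero R] [One R] (r : ℕ)
    (g : Equiv.Perm α) (a b : {s : Finset α // #s = k}) :
    johnsonMatrix R α k r (permKSubsets α k g a) (permKSubsets α k g b) =
      johnsonMatrix R α k r a b := by
  simp only [johnsonMatrix, Matrix.of_apply, card_inter_permKSubsets]

theorem exists_eq_sum_johnsonMatrix {R : Type*} [Semiring R]
    (M : Matrix {s : Finset α // #s = k} {s : Finset α // #s = k} R) (t : ℕ)
    (hM : ∀ a b a' b', #(a.1 ∩ b.1) = #(a'.1 ∩ b'.1) → M a b = M a' b')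
    (hM_lt : ∀ a b, #(a.1 ∩ b.1) < t → M a b = 0) :
    ∃ c : ℕ → R, M = ∑ r ∈ range (k - t + 1), c r • johnsonMatrix R α k r := by
  -- `f i` is the common value of `M` on the pairs meeting in `i` points
  let f := Function.extend (fun p : {s : Finset α // #s = k} × {s : Finset α // #s = k} =>
    #(p.1.1 ∩ p.2.1)) (fun p => M p.1 p.2) 0
  have hf (a b) : f #(a.1 ∩ b.1) = M a b :=
    Function.FactorsThrough.extend_apply (fun p q h => hM _ _ _ _ h) _ (a, b)
  refine ⟨fun r => f (k - r), Matrix.ext fun a b => ?_⟩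
  have hk : #(a.1 ∩ b.1) ≤ k := (card_le_card inter_subset_left).trans_eq a.2
  simp only [Matrix.sum_apply, Matrix.smul_apply, johnsonMatrix, Matrix.of_apply, smul_eq_mul,
    mul_ite, mul_one, mul_zero]
  rw [sum_eq_single (k - #(a.1 ∩ b.1)), if_pos (by omega), Nat.sub_sub_self hk, hf]
  · intro r hr hne
    rw [mem_range] at hr
    rw [if_neg (by omega)]
  · intro hr
    rw [mem_range] at hr
    rw [if_pos (by omega), Nat.sub_sub_self hk, hf, hM_lt a b (by omega)]

theorem reynolds_permKSubsets_apply_eq_of_card_inter_eq [Fintype α] {R : Type*} [Field R]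
    (B : Matrix {s : Finset α // #s = k} {s : Finset α // #s = k} R)
    {a b a' b' : {s : Finset α // #s = k}} (h : #(a.1 ∩ b.1) = #(a'.1 ∩ b'.1)) :
    Matrix.reynolds (permKSubsets α k) B a b = Matrix.reynolds (permKSubsets α k) B a' b' := by
  obtain ⟨g, rfl, rfl⟩ := exists_permKSubsets_eq h
  exact (Matrix.reynolds_apply_perm _ B g a b).symm

end KSubsets

theorem projection_of_t_intersecting_family_general (n k t : ℕ)
    (F : Finset {s : Finset (Fin n) // s.card = k})
    (hint : ∀ α ∈ F, ∀ β ∈ F, t ≤ (α.1 ∩ β.1).card)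
    (A : ℕ → Matrix {s : Finset (Fin n) // s.card = k} {s : Finset (Fin n) // s.card = k} ℝ)
    (hA : ∀ r, A r = Matrix.of (fun α β => if (α.1 ∩ β.1).card = k - r then 1 else 0))
    (x : {s : Finset (Fin n) // s.card = k} → ℝ)
    (hx : x = fun α => if α ∈ F then 1 else 0)
    (P : Matrix {s : Finset (Fin n) // s.card = k} {s : Finset (Fin n) // s.card = k} ℝ)
    (c : ℕ → ℝ)
    (hspan : P = ∑ r ∈ Finset.range (k + 1), c r • A r)
    (hproj : ∀ r ∈ Finset.range (k + 1),
      ((Matrix.of (fun α β => x α * x β) - P)ᵀ * A r).trace = 0) :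
    P.PosSemidef ∧
    (∃ c' : ℕ → ℝ, P = ∑ r ∈ Finset.range (k - t + 1), c' r • A r) ∧
    P.trace = F.card ∧
    (∑ α, ∑ β, P α β) = (F.card : ℝ) ^ 2 := by
  obtain rfl : A = johnsonMatrix ℝ (Fin n) k := funext hA
  set N : Matrix _ _ ℝ := of fun α β => x α * x β
  have hN_lt (a b) (hab : #(a.1 ∩ b.1) < t) : reynolds (permKSubsets (Fin n) k) N a b = 0 :=
    reynolds_apply_eq_zero _ fun g => by
      have hg := card_inter_permKSubsets g a b
      simp only [N, of_apply, hx]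
      split_ifs with ha hb
      · have := hint _ ha _ hb
        omega
      all_goals simp
  obtain ⟨d, hd⟩ := exists_eq_sum_johnsonMatrix _ 0
    (fun _ _ _ _ ↦ reynolds_permKSubsets_apply_eq_of_card_inter_eq N) (by simp)
  obtain rfl : P = reynolds (permKSubsets (Fin n) k) N :=
    eq_of_forall_trace_transpose_sub_mul_eq_zero hspan hd fun r hr => by
      have h := hproj r hr
      simp only [transpose_sub, sub_mul, trace_sub,
        trace_transpose_reynolds_mul _ N (johnsonMatrix_apply_permKSubsets r)] at h ⊢
      linarith
  have hN_psd : N.PosSemidef := by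
    have h := posSemidef_vecMulVec_self_star x
    rwa [star_trivial] at h
  refine ⟨hN_psd.reynolds _,
    exists_eq_sum_johnsonMatrix _ t
      (fun _ _ _ _ ↦ reynolds_permKSubsets_apply_eq_of_card_inter_eq N) hN_lt, ?_, ?_⟩
  · rw [trace_reynolds]
    simp [N, hx, trace]
  · rw [sum_reynolds]
    simp [N, hx, sq]

theorem projection_of_t_intersecting_family (n k t : ℕ) (ht : t ≤ k)
    (F : Finset {s : Finset (Fin n) // s.card = k})
    (hint : ∀ α ∈ F, ∀ β ∈ F, t ≤ (α.1 ∩ β.1).card)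
    (A : ℕ → Matrix {s : Finset (Fin n) // s.card = k} {s : Finset (Fin n) // s.card = k} ℝ)
    (hA : ∀ r, A r = Matrix.of (fun α β => if (α.1 ∩ β.1).card = k - r then 1 else 0))
    (x : {s : Finset (Fin n) // s.card = k} → ℝ)
    (hx : x = fun α => if α ∈ F then 1 else 0)
    (P : Matrix {s : Finset (Fin n) // s.card = k} {s : Finset (Fin n) // s.card = k} ℝ)
    (c : ℕ → ℝ)
    (hspan : P = ∑ r ∈ Finset.range (k + 1), c r • A r)
    (hproj : ∀ r ∈ Finset.range (k + 1),
      ((Matrix.of (fun α β => x α * x β) - P)ᵀ * A r).trace = 0) :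
    P.PosSemidef ∧
    (∃ c' : ℕ → ℝ, P = ∑ r ∈ Finset.range (k - t + 1), c' r • A r) ∧
    P.trace = F.card ∧
    (∑ α, ∑ β, P α β) = (F.card : ℝ) ^ 2 :=
  projection_of_t_intersecting_family_general n k t F hint A hA x hx P c hspan hproj
end

section
/- Suppose a t-(n,k,1) design exists on an n-set. Then any t-intersecting family F of k-subsets of the n-set satisfies |F| ≤ C(n−t, k−t). -/
/-!
The symmetric group acts transitively on `k`-sets and preserves the relation `t ≤ |A ∩ B|`.
A permutation maps at most one member of the `t`-intersecting family `F` onto a block of the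
design, since two blocks share fewer than `t` points; averaging over all permutations gives the
clique–coclique bound `|F| |D| ≤ C(n, k)`. Counting incident pairs (`t`-set, block) gives
`|D| C(k, t) = C(n, t)`, and `C(n, k) C(k, t) = C(n, t) C(n - t, k - t)`.
-/

open Finset

namespace MulAction

variable {G X : Type*} [Group G] [MulAction G X]

variable (G) in
theorem card_smul_eq_mul_card_eq_card [IsPretransitive G X] (a b : X) :
    Nat.card {g : G // g • a = b} * Nat.card X = Nat.card G := by
  obtain ⟨h, rfl⟩ := exists_smul_eq G a b
  have : Nat.card {g : G // g • a = h • a} = Nat.card (stabilizer G a) :=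
    Nat.card_congr <| ((Equiv.mulLeft h).subtypeEquiv fun g => by
      simp [mul_smul, smul_left_cancel_iff]).symm
  rw [this, ← index_stabilizer_of_transitive G a, Subgroup.card_mul_index]

theorem card_filter_smul_eq_le_one {r : X → X → Prop}
    (hr : ∀ (g : G) x y, r x y → r (g • x) (g • y)) {F C : Finset X}
    (hF : ∀ a ∈ F, ∀ b ∈ F, r a b) (hC : ∀ a ∈ C, ∀ b ∈ C, r a b → a = b) (g : G)
    [DecidablePred fun p : X × X => g • p.1 = p.2] :
    #{p ∈ F ×ˢ C | g • p.1 = p.2} ≤ 1 := by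
  refine card_le_one.2 fun p hp q hq => ?_
  simp only [mem_filter, mem_product] at hp hq
  have h2 : p.2 = q.2 := by
    refine hC _ hp.1.2 _ hq.1.2 ?_
    rw [← hp.2, ← hq.2]
    exact hr g _ _ (hF _ hp.1.1 _ hq.1.1)
  have h1 : p.1 = q.1 := smul_left_cancel g (by rw [hp.2, hq.2, h2])
  exact Prod.ext h1 h2

theorem card_mul_card_le_card_of_isPretransitive [Fintype G] [IsPretransitive G X]
    {r : X → X → Prop} (hr : ∀ (g : G) x y, r x y → r (g • x) (g • y)) {F C : Finset X}
    (hF : ∀ a ∈ F, ∀ b ∈ F, r a b) (hC : ∀ a ∈ C, ∀ b ∈ C, r a b → a = b) :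
    #F * #C ≤ Nat.card X := by
  classical
  let incident : X × X → G → Prop := fun p g => g • p.1 = p.2
  have hfiber : ∀ p : X × X, #(univ.bipartiteAbove incident p) * Nat.card X = Nat.card G := by
    intro p
    rw [← card_smul_eq_mul_card_eq_card G p.1 p.2, Nat.card_eq_fintype_card (α := {g : G // _}),
      Fintype.card_subtype]
    rfl
  refine Nat.le_of_mul_le_mul_right ?_ (Nat.card_pos (α := G))
  calc #F * #C * Nat.card G
      = (∑ p ∈ F ×ˢ C, #(univ.bipartiteAbove incident p)) * Nat.card X := by
        rw [sum_mul, sum_congr rfl fun p _ => hfiber p, sum_const, card_product, smul_eq_mul]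
    _ = (∑ g : G, #((F ×ˢ C).bipartiteBelow incident g)) * Nat.card X := by
        rw [sum_card_bipartiteAbove_eq_sum_card_bipartiteBelow]
    _ ≤ (∑ _g : G, 1) * Nat.card X := by
        gcongr with g
        exact card_filter_smul_eq_le_one hr hF hC g
    _ = Nat.card X * Nat.card G := by
        rw [sum_const, card_univ, smul_eq_mul, mul_one, Nat.card_eq_fintype_card (α := G),
          mul_comm]

end MulAction

section SteinerSystem

variable {α : Type*} [DecidableEq α] {k t : ℕ}

def IsSteinerSystem (t : ℕ) (D : Finset (Set.powersetCard α k)) : Prop :=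
  ∀ T : Finset α, #T = t → ∃! B, B ∈ D ∧ T ⊆ (B : Finset α)

namespace IsSteinerSystem

variable {D : Finset (Set.powersetCard α k)}

theorem eq_of_le_card_inter (hD : IsSteinerSystem t D) {B B' : Set.powersetCard α k}
    (hB : B ∈ D) (hB' : B' ∈ D) (h : t ≤ #((B : Finset α) ∩ B')) : B = B' := by
  obtain ⟨T, hT, hTcard⟩ := exists_subset_card_eq h
  exact (hD T hTcard).unique ⟨hB, hT.trans inter_subset_left⟩
    ⟨hB', hT.trans inter_subset_right⟩

theorem card_mul_choose [Fintype α] (hD : IsSteinerSystem t D) :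
    #D * k.choose t = (Fintype.card α).choose t := by
  let contains (B : Set.powersetCard α k) (T : Finset α) : Prop := T ⊆ B
  have hblock : ∀ B ∈ D, #((univ.powersetCard t).bipartiteAbove contains B) = k.choose t := by
    intro B _
    have hsub :
        (univ.powersetCard t).bipartiteAbove contains B = (B : Finset α).powersetCard t := by
      ext T
      simp [contains, bipartiteAbove, and_comm]
    rw [hsub, card_powersetCard, Set.powersetCard.card_eq]
  have hpoint : ∀ T ∈ univ.powersetCard t, #(D.bipartiteBelow contains T) = 1 := by
    intro T hT
    obtain ⟨B, hB, huniq⟩ := hD T (mem_powersetCard_univ.1 hT)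
    refine card_eq_one.2 ⟨B, ext fun B' => ?_⟩
    simp only [bipartiteBelow, mem_filter, mem_singleton]
    exact ⟨huniq B', fun h => h ▸ hB⟩
  simpa [card_powersetCard] using card_mul_eq_card_mul contains hblock hpoint

open scoped Pointwise in
theorem card_le_choose [Fintype α] (hD : IsSteinerSystem t D) (ht : t ≤ k)
    (hk : k ≤ Fintype.card α) {F : Finset (Set.powersetCard α k)}
    (hF : ∀ A ∈ F, ∀ B ∈ F, t ≤ #((A : Finset α) ∩ B)) :
    #F ≤ (Fintype.card α - t).choose (k - t) := by
  have hinv : ∀ (g : Equiv.Perm α) (A B : Set.powersetCard α k),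
      t ≤ #((A : Finset α) ∩ B) →
        t ≤ #(((g • A : Set.powersetCard α k) : Finset α) ∩ ↑(g • B)) := by
    intro g A B h
    rwa [Set.powersetCard.coe_smul, Set.powersetCard.coe_smul, ← smul_finset_inter,
      card_smul_finset]
  have := Set.powersetCard.isPretransitive (α := α) (n := k)
  have hFD : #F * #D ≤ (Fintype.card α).choose k := by
    rw [← Nat.card_eq_fintype_card, ← Set.powersetCard.card]
    exact MulAction.card_mul_card_le_card_of_isPretransitive hinv hF fun _ hB _ hB' =>
      hD.eq_of_le_card_inter hB hB'
  refine Nat.le_of_mul_le_mul_right ?_ (Nat.choose_pos (ht.trans hk))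
  calc #F * (Fintype.card α).choose t
      = #F * #D * k.choose t := by rw [← hD.card_mul_choose, mul_assoc]
    _ ≤ (Fintype.card α).choose k * k.choose t := Nat.mul_le_mul_right _ hFD
    _ = (Fintype.card α - t).choose (k - t) * (Fintype.card α).choose t := by
      rw [Nat.choose_mul ht, mul_comm]

end IsSteinerSystem

end SteinerSystem

theorem ekr_bound_of_design_exists (n k t : ℕ) (ht : t ≤ k) (hk : k ≤ n)
    (hdesign : ∃ D : Finset {s : Finset (Fin n) // s.card = k},
      ∀ T : Finset (Fin n), T.card = t → ∃! B, B ∈ D ∧ T ⊆ B.1)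
    (F : Finset {s : Finset (Fin n) // s.card = k})
    (hint : ∀ α ∈ F, ∀ β ∈ F, t ≤ (α.1 ∩ β.1).card) :
    F.card ≤ Nat.choose (n - t) (k - t) := by
  obtain ⟨D, hD⟩ := hdesign
  -- `{s // s.card = k}` is definitionally `Set.powersetCard (Fin n) k`.
  have h := IsSteinerSystem.card_le_choose (α := Fin n) (D := D) hD ht
    (by rwa [Fintype.card_fin]) (F := F) hint
  rwa [Fintype.card_fin] at h
end
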